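/- Let S ⊆ ℝⁿ be a subspace with orthogonal projection P_S and residualizer M_S = I − P_S, and let W ∈ ℝ^{n×k} be a matrix. Let T = S + col(W) be the subspace spanned by S together with the columns of W. Then the orthogonal projection onto T satisfies P_T = P_S + P_{M_S W}, where P_{M_S W} is the orthogonal projection onto the column space of M_S W. Consequently, for every Y ∈ ℝⁿ, Yᵀ(M_S − M_T)Y = (M_S Y)ᵀ P_{M_S W} (M_S Y). -/

import Mathlib

/-!
Write `U` for the span of the residualized columns `W j - P_S (W j)`. These lie in `Sᗮ`, so
`U ⟂ S`, and since they differ from the `W j` by vectors of `S`, `S ⊔ U = S ⊔ span (range W) = T`.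
The projection onto the sum of two orthogonal subspaces is the sum of the projections, which gives
`P_T = P_S + P_U`. As `P_U` kills `S`, `P_U (M_S Y) = P_U Y`, and the residual identity is
`⟪Y, P_U Y⟫ = ⟪M_S Y, P_U Y⟫`, again by `U ⟂ S`.
-/

open scoped RealInnerProductSpace

namespace Submodule

section Span

variable {R M ι : Type*} [Ring R] [AddCommGroup M] [Module R M]

theorem sup_span_range_sub_le (K : Submodule R M) (v f : ι → M) (hf : ∀ i, f i ∈ K) :
    K ⊔ span R (Set.range (v - f)) ≤ K ⊔ span R (Set.range v) :=
  sup_le le_sup_left <| span_le.2 <| Set.range_subset_iff.2 fun i =>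
    sub_mem (mem_sup_right (subset_span ⟨i, rfl⟩)) (mem_sup_left (hf i))

theorem sup_span_range_sub (K : Submodule R M) (v f : ι → M) (hf : ∀ i, f i ∈ K) :
    K ⊔ span R (Set.range (v - f)) = K ⊔ span R (Set.range v) := by
  refine le_antisymm (K.sup_span_range_sub_le v f hf) ?_
  simpa using K.sup_span_range_sub_le (v - f) (-f) fun i => neg_mem (hf i)

end Span

variable {𝕜 E : Type*} [RCLike 𝕜] [NormedAddCommGroup E] [InnerProductSpace 𝕜 E]

theorem isOrtho_span_range_sub_starProjection {ι : Type*} (K : Submodule 𝕜 E)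
    [K.HasOrthogonalProjection] (v : ι → E) :
    span 𝕜 (Set.range fun i => v i - K.starProjection (v i)) ⟂ K :=
  span_le.2 <| Set.range_subset_iff.2 fun i => K.sub_starProjection_mem_orthogonal (v i)

theorem IsOrtho.starProjection_sup {U V : Submodule 𝕜 E} [U.HasOrthogonalProjection]
    [V.HasOrthogonalProjection] [(U ⊔ V).HasOrthogonalProjection] (h : U ⟂ V) (x : E) :
    (U ⊔ V).starProjection x = U.starProjection x + V.starProjection x := by
  refine eq_starProjection_of_mem_orthogonal
    (add_mem_sup (U.starProjection_apply_mem x) (V.starProjection_apply_mem x)) ?_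
  rw [← inf_orthogonal, sub_add_eq_sub_sub]
  refine mem_inf.2 ⟨?_, ?_⟩
  · exact sub_mem (U.sub_starProjection_mem_orthogonal x) (h.symm (V.starProjection_apply_mem x))
  · rw [sub_right_comm]
    exact sub_mem (V.sub_starProjection_mem_orthogonal x) (h (U.starProjection_apply_mem x))

theorem IsOrtho.starProjection_sub_starProjection {U V : Submodule 𝕜 E}
    [U.HasOrthogonalProjection] [V.HasOrthogonalProjection] (h : U ⟂ V) (x : E) :
    U.starProjection (x - V.starProjection x) = U.starProjection x := by
  rw [map_sub, (U.starProjection_apply_eq_zero_iff).2 (h.symm (V.starProjection_apply_mem x)),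
    sub_zero]

end Submodule

open Submodule in
/-- Frisch–Waugh–Lovell decomposition: adding the columns of `W` to a design
spanning `S` yields projection `P_T = P_S + P_{M_S W}`, and the residual
sum-of-squares improvement equals the quadratic form of the residual `M_S Y`
in the projection onto the residualized columns. -/
theorem frisch_waugh_lovell {n k : ℕ}
    (S : Submodule ℝ (EuclideanSpace ℝ (Fin n)))
    (W : Fin k → EuclideanSpace ℝ (Fin n))
    (T U : Submodule ℝ (EuclideanSpace ℝ (Fin n)))
    (hT : T = S ⊔ Submodule.span ℝ (Set.range W))
    (hU : U = Submodule.span ℝ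
      (Set.range fun j => W j - (Submodule.orthogonalProjectionOnto S (W j) : EuclideanSpace ℝ (Fin n)))) :
    (∀ Y : EuclideanSpace ℝ (Fin n),
        (Submodule.orthogonalProjectionOnto T Y : EuclideanSpace ℝ (Fin n)) =
          (Submodule.orthogonalProjectionOnto S Y : EuclideanSpace ℝ (Fin n)) +
            (Submodule.orthogonalProjectionOnto U Y : EuclideanSpace ℝ (Fin n))) ∧
      ∀ Y : EuclideanSpace ℝ (Fin n),
        ⟪Y, Y - (Submodule.orthogonalProjectionOnto S Y : EuclideanSpace ℝ (Fin n))⟫ -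
            ⟪Y, Y - (Submodule.orthogonalProjectionOnto T Y : EuclideanSpace ℝ (Fin n))⟫ =
          ⟪Y - (Submodule.orthogonalProjectionOnto S Y : EuclideanSpace ℝ (Fin n)),
            (Submodule.orthogonalProjectionOnto U
              (Y - (Submodule.orthogonalProjectionOnto S Y : EuclideanSpace ℝ (Fin n))) :
                EuclideanSpace ℝ (Fin n))⟫ := by
  simp only [← starProjection_apply] at hU ⊢
  have hUS : U ⟂ S := hU ▸ S.isOrtho_span_range_sub_starProjection W
  have hTSU : T = S ⊔ U := by
    rw [hT, hU]
    exact (S.sup_span_range_sub W _ fun j => S.starProjection_apply_mem (W j)).symm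
  subst hTSU
  have hT_proj := hUS.symm.starProjection_sup
  refine ⟨hT_proj, fun Y => ?_⟩
  rw [hT_proj, hUS.starProjection_sub_starProjection, inner_sub_left,
    hUS.symm.inner_eq (S.starProjection_apply_mem Y) (U.starProjection_apply_mem Y),
    inner_sub_right, inner_sub_right, inner_add_right, sub_zero]
  ring
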